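/- Let S1, S2, W1, Y be finite-valued random variables on a common probability space, let X1 = φ1(S1) and X2 = φ2(S2) be deterministic functions of S1 and S2 respectively, and suppose I(S1, S2, W1; Y | X1, X2) = 0 (the channel output Y depends on everything only through the inputs (X1, X2)). Then I(X1; Y | X2) ≥ H(S1 | S2, W1) − H(S1 | Y, W1). -/
import Mathlib


open scoped BigOperators Classical

noncomputable section

/-- Probability that the random variable `X` equals `a`, under the pmf `μ`
on the finite sample space `Ω`. -/
def prD {Ω α : Type} [Fintype Ω] (μ : Ω → ℝ) (X : Ω → α) (a : α) : ℝ :=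
  ∑ ω, if X ω = a then μ ω else 0

/-- Shannon entropy (in nats) of the random variable `X` under the pmf `μ`. -/
def ent {Ω α : Type} [Fintype Ω] [Fintype α] (μ : Ω → ℝ) (X : Ω → α) : ℝ :=
  -∑ a, prD μ X a * Real.log (prD μ X a)

/-- Conditional entropy `H(X | Y)` under the pmf `μ`. -/
def condEnt {Ω α β : Type} [Fintype Ω] [Fintype α] [Fintype β]
    (μ : Ω → ℝ) (X : Ω → α) (Y : Ω → β) : ℝ :=
  ent μ (fun ω => (X ω, Y ω)) - ent μ Y

/-- Mutual information `I(X ; Y)` under the pmf `μ`. -/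
def mutInf {Ω α β : Type} [Fintype Ω] [Fintype α] [Fintype β]
    (μ : Ω → ℝ) (X : Ω → α) (Y : Ω → β) : ℝ :=
  ent μ X + ent μ Y - ent μ (fun ω => (X ω, Y ω))

/-- Conditional mutual information `I(X ; Y | Z)` under the pmf `μ`. -/
def condMutInf {Ω α β γ : Type} [Fintype Ω] [Fintype α] [Fintype β] [Fintype γ]
    (μ : Ω → ℝ) (X : Ω → α) (Y : Ω → β) (Z : Ω → γ) : ℝ :=
  condEnt μ X Z - condEnt μ X (fun ω => (Y ω, Z ω))

/-- `p` is a probability mass function on the finite type `α`. -/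
def IsPmf {α : Type} [Fintype α] (p : α → ℝ) : Prop :=
  (∀ a, 0 ≤ p a) ∧ ∑ a, p a = 1


section AuxLemmas

variable {Ω : Type} [Fintype Ω]

lemma prD_nonneg {α : Type} (μ : Ω → ℝ) (hμ : ∀ ω, 0 ≤ μ ω) (X : Ω → α) (a : α) :
    0 ≤ prD μ X a :=
  Finset.sum_nonneg fun ω _ => by split <;> simp [hμ ω]

lemma le_prD {α : Type} (μ : Ω → ℝ) (hμ : ∀ ω, 0 ≤ μ ω) (X : Ω → α) (ω₀ : Ω) :
    μ ω₀ ≤ prD μ X (X ω₀) := by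
  unfold prD
  have := Finset.single_le_sum (f := fun ω => if X ω = X ω₀ then μ ω else 0)
    (fun ω _ => by beta_reduce; split <;> simp [hμ ω]) (Finset.mem_univ ω₀)
  simpa using this

lemma prD_mono {α β : Type} (μ : Ω → ℝ) (hμ : ∀ ω, 0 ≤ μ ω) {X : Ω → α} {X' : Ω → β}
    {a : α} {b : β} (h : ∀ ω, X ω = a → X' ω = b) :
    prD μ X a ≤ prD μ X' b := by
  apply Finset.sum_le_sum
  intro ω _
  by_cases hc : X ω = a
  · simp [hc, h ω hc]
  · simp [hc]; split <;> simp [hμ ω]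

lemma sum_prD_mul {α : Type} [Fintype α] (μ : Ω → ℝ) (X : Ω → α) (F : α → ℝ) :
    ∑ a, prD μ X a * F a = ∑ ω, μ ω * F (X ω) := by
  unfold prD
  simp_rw [Finset.sum_mul, ite_mul, zero_mul]
  rw [Finset.sum_comm]
  simp

lemma sum_prD {α : Type} [Fintype α] (μ : Ω → ℝ) (hsum : ∑ ω, μ ω = 1) (X : Ω → α) :
    ∑ a, prD μ X a = 1 := by
  have := sum_prD_mul μ X (fun _ => 1)
  simpa [hsum] using this

lemma ent_eq {α : Type} [Fintype α] (μ : Ω → ℝ) (X : Ω → α) :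
    ent μ X = -∑ ω, μ ω * Real.log (prD μ X (X ω)) := by
  unfold ent
  congr 1
  exact sum_prD_mul μ X (fun a => Real.log (prD μ X a))

lemma ent_congr {α β : Type} [Fintype α] [Fintype β] (μ : Ω → ℝ)
    (X : Ω → α) (X' : Ω → β)
    (h : ∀ ω ω', X ω = X ω' ↔ X' ω = X' ω') :
    ent μ X = ent μ X' := by
  rw [ent_eq, ent_eq]
  congr 1
  apply Finset.sum_congr rfl
  intro ω _
  have : prD μ X (X ω) = prD μ X' (X' ω) :=
    Finset.sum_congr rfl fun ω' _ => by rw [if_congr (h ω' ω) rfl rfl]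
  rw [this]

lemma sum_prD_fst {α γ : Type} [Fintype α] [Fintype γ] (μ : Ω → ℝ)
    (X : Ω → α) (Z : Ω → γ) (z : γ) :
    ∑ x, prD μ (fun ω => (X ω, Z ω)) (x, z) = prD μ Z z := by
  unfold prD
  rw [Finset.sum_comm]
  apply Finset.sum_congr rfl
  intro ω _
  by_cases hz : Z ω = z
  · simp [Prod.ext_iff, hz]
  · simp [Prod.ext_iff, hz]

end AuxLemmas

lemma condMutInf_nonneg {Ω : Type} [Fintype Ω] {α β γ : Type} [Fintype α] [Fintype β] [Fintype γ]
    (μ : Ω → ℝ) (hμ : IsPmf μ)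
    (X : Ω → α) (Y : Ω → β) (Z : Ω → γ) :
    0 ≤ condMutInf μ X Y Z := by
  obtain ⟨hnn, hsum⟩ := hμ
  -- abbreviations
  have key : condMutInf μ X Y Z =
      ∑ ω, μ ω * (Real.log (prD μ (fun ω => (X ω, (Y ω, Z ω))) (X ω, (Y ω, Z ω)))
        + Real.log (prD μ Z (Z ω))
        - Real.log (prD μ (fun ω => (X ω, Z ω)) (X ω, Z ω))
        - Real.log (prD μ (fun ω => (Y ω, Z ω)) (Y ω, Z ω))) := by
    simp only [condMutInf, condEnt, ent_eq, mul_add, mul_sub]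
    simp only [Finset.sum_sub_distrib, Finset.sum_add_distrib]
    ring
  rw [key]
  set F : α × (β × γ) → ℝ := fun p =>
    prD μ (fun ω => (X ω, Z ω)) (p.1, p.2.2) * prD μ (fun ω => (Y ω, Z ω)) p.2
      / (prD μ (fun ω => (X ω, (Y ω, Z ω))) p * prD μ Z p.2.2) with hF
  have step1 : ∀ ω ∈ Finset.univ (α := Ω),
      μ ω - μ ω * F (X ω, (Y ω, Z ω)) ≤
      μ ω * (Real.log (prD μ (fun ω => (X ω, (Y ω, Z ω))) (X ω, (Y ω, Z ω)))
        + Real.log (prD μ Z (Z ω))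
        - Real.log (prD μ (fun ω => (X ω, Z ω)) (X ω, Z ω))
        - Real.log (prD μ (fun ω => (Y ω, Z ω)) (Y ω, Z ω))) := by
    intro ω _
    rcases eq_or_lt_of_le (hnn ω) with hz | hpos
    · simp [← hz]
    · set A := prD μ (fun ω => (X ω, (Y ω, Z ω))) (X ω, (Y ω, Z ω)) with hA
      set B := prD μ (fun ω => (X ω, Z ω)) (X ω, Z ω) with hB
      set C := prD μ (fun ω => (Y ω, Z ω)) (Y ω, Z ω) with hC
      set D := prD μ Z (Z ω) with hD
      have hApos : 0 < A := lt_of_lt_of_le hpos (le_prD μ hnn _ ω)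
      have hBpos : 0 < B := lt_of_lt_of_le hpos (le_prD μ hnn _ ω)
      have hCpos : 0 < C := lt_of_lt_of_le hpos (le_prD μ hnn _ ω)
      have hDpos : 0 < D := lt_of_lt_of_le hpos (le_prD μ hnn _ ω)
      have hFval : F (X ω, (Y ω, Z ω)) = B * C / (A * D) := by rw [hF]
      rw [hFval]
      have hlog : Real.log (B * C / (A * D)) ≤ B * C / (A * D) - 1 :=
        Real.log_le_sub_one_of_pos (by positivity)
      rw [Real.log_div (by positivity) (by positivity), Real.log_mul hBpos.ne' hCpos.ne',
        Real.log_mul hApos.ne' hDpos.ne'] at hlog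
      nlinarith [hpos, hlog]
  have h1 := Finset.sum_le_sum step1
  have h2 : ∑ ω, (μ ω - μ ω * F (X ω, (Y ω, Z ω))) =
      1 - ∑ ω, μ ω * F (X ω, (Y ω, Z ω)) := by
    rw [Finset.sum_sub_distrib, hsum]
  have h3 : ∑ ω, μ ω * F (X ω, (Y ω, Z ω)) ≤ 1 := by
    have hrw : ∑ ω, μ ω * F (X ω, (Y ω, Z ω)) =
        ∑ p, prD μ (fun ω => (X ω, (Y ω, Z ω))) p * F p :=
      (sum_prD_mul μ (fun ω => (X ω, (Y ω, Z ω))) F).symm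
    rw [hrw]
    -- termwise bound
    have step4 : ∑ p, prD μ (fun ω => (X ω, (Y ω, Z ω))) p * F p ≤
        ∑ p : α × (β × γ), prD μ (fun ω => (X ω, Z ω)) (p.1, p.2.2) *
          prD μ (fun ω => (Y ω, Z ω)) p.2 / prD μ Z p.2.2 := by
      apply Finset.sum_le_sum
      intro p _
      set pV := prD μ (fun ω => (X ω, (Y ω, Z ω))) p with hpV
      set b := prD μ (fun ω => (X ω, Z ω)) (p.1, p.2.2)
      set c := prD μ (fun ω => (Y ω, Z ω)) p.2
      set d := prD μ Z p.2.2
      have hbn : 0 ≤ b := prD_nonneg μ hnn _ _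
      have hcn : 0 ≤ c := prD_nonneg μ hnn _ _
      have hdn : 0 ≤ d := prD_nonneg μ hnn _ _
      rcases eq_or_lt_of_le (prD_nonneg μ hnn (fun ω => (X ω, (Y ω, Z ω))) p) with hz | hpos
      · have hFp : F p = b * c / (pV * d) := by rw [hF]
        have hz' : pV = 0 := by rw [hpV, ← hz]
        rw [hFp, hz', zero_mul]
        exact div_nonneg (mul_nonneg hbn hcn) hdn
      · have hdpos : 0 < d := lt_of_lt_of_le hpos
          (prD_mono μ hnn (fun ω hω => by rw [show Z ω = ((X ω, (Y ω, Z ω)) : α × β × γ).2.2 from rfl, hω]))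
        have hFp : F p = b * c / (pV * d) := by rw [hF]
        rw [hFp]
        rw [mul_div_assoc'] at *
        rw [show pV * (b * c) / (pV * d) = b * c / d from by
          rw [mul_div_mul_left _ _ hpos.ne']]
    refine le_trans step4 ?_
    -- now sum over the product type
    rw [Fintype.sum_prod_type]
    have inner : ∀ x : α, ∑ q : β × γ, prD μ (fun ω => (X ω, Z ω)) (x, q.2) *
        prD μ (fun ω => (Y ω, Z ω)) q / prD μ Z q.2 ≤
        ∑ z : γ, prD μ (fun ω => (X ω, Z ω)) (x, z) := by
      intro x
      rw [Fintype.sum_prod_type]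
      rw [Finset.sum_comm]
      apply Finset.sum_le_sum
      intro z _
      have : ∑ y : β, prD μ (fun ω => (X ω, Z ω)) (x, z) *
          prD μ (fun ω => (Y ω, Z ω)) (y, z) / prD μ Z z =
          prD μ (fun ω => (X ω, Z ω)) (x, z) * prD μ Z z / prD μ Z z := by
        rw [← Finset.sum_div, ← Finset.mul_sum, sum_prD_fst μ Y Z z]
      rw [this]
      rcases eq_or_ne (prD μ Z z) 0 with hz | hz
      · rw [hz]; simp [prD_nonneg μ hnn]
      · rw [mul_div_assoc, div_self hz, mul_one]
    refine le_trans (Finset.sum_le_sum fun x _ => inner x) ?_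
    rw [Finset.sum_comm]
    have : ∀ z : γ, ∑ x : α, prD μ (fun ω => (X ω, Z ω)) (x, z) = prD μ Z z :=
      fun z => sum_prD_fst μ X Z z
    rw [Finset.sum_congr rfl (fun z _ => this z), sum_prD μ hsum Z]
  linarith [h1, h2, h3]


/-- If `X1 = φ1(S1)` and `X2 = φ2(S2)` are deterministic functions of the
sources and `I(S1,S2,W1; Y | X1,X2) = 0` (the channel output depends on everything only
through the inputs), then `I(X1; Y | X2) ≥ H(S1|S2,W1) − H(S1|Y,W1)`. -/
theorem mac_independent_sources_converse_single_user
    {Ω S1t S2t W1t X1t X2t Yt : Type}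
    [Fintype Ω] [Fintype S1t] [Fintype S2t] [Fintype W1t]
    [Fintype X1t] [Fintype X2t] [Fintype Yt]
    (μ : Ω → ℝ) (hμ : IsPmf μ)
    (S1 : Ω → S1t) (S2 : Ω → S2t) (W1 : Ω → W1t) (Y : Ω → Yt)
    (φ1 : S1t → X1t) (φ2 : S2t → X2t)
    (h : condMutInf μ (fun ω => (S1 ω, S2 ω, W1 ω)) Y
      (fun ω => (φ1 (S1 ω), φ2 (S2 ω))) = 0) :
    condEnt μ S1 (fun ω => (S2 ω, W1 ω)) - condEnt μ S1 (fun ω => (Y ω, W1 ω)) ≤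
      condMutInf μ (fun ω => φ1 (S1 ω)) Y (fun ω => φ2 (S2 ω)) := by
  have hA := condMutInf_nonneg μ hμ S1 S2 (fun ω => (Y ω, W1 ω))
  have hB := condMutInf_nonneg μ hμ (fun ω => (S2 ω, W1 ω)) Y (fun ω => φ2 (S2 ω))
  simp only [condMutInf, condEnt] at h hA hB ⊢
  have e1 : ent μ (fun ω => ((S1 ω, S2 ω, W1 ω), (φ1 (S1 ω), φ2 (S2 ω)))) =
      ent μ (fun ω => (S1 ω, (S2 ω, W1 ω))) :=
    ent_congr μ _ _ (fun ω ω' => by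
      simp only [Prod.ext_iff]; constructor <;> intro hh <;> simp_all)
  have e2 : ent μ (fun ω => ((S1 ω, S2 ω, W1 ω), (Y ω, (φ1 (S1 ω), φ2 (S2 ω))))) =
      ent μ (fun ω => (S1 ω, (S2 ω, (Y ω, W1 ω)))) :=
    ent_congr μ _ _ (fun ω ω' => by
      simp only [Prod.ext_iff]; constructor <;> intro hh <;> simp_all)
  have e3 : ent μ (fun ω => ((S2 ω, W1 ω), φ2 (S2 ω))) =
      ent μ (fun ω => (S2 ω, W1 ω)) :=
    ent_congr μ _ _ (fun ω ω' => by
      simp only [Prod.ext_iff]; constructor <;> intro hh <;> simp_all)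
  have e4 : ent μ (fun ω => ((S2 ω, W1 ω), (Y ω, φ2 (S2 ω)))) =
      ent μ (fun ω => (S2 ω, (Y ω, W1 ω))) :=
    ent_congr μ _ _ (fun ω ω' => by
      simp only [Prod.ext_iff]; constructor <;> intro hh <;> simp_all)
  have e5 : ent μ (fun ω => (Y ω, (φ1 (S1 ω), φ2 (S2 ω)))) =
      ent μ (fun ω => (φ1 (S1 ω), (Y ω, φ2 (S2 ω)))) :=
    ent_congr μ _ _ (fun ω ω' => by
      simp only [Prod.ext_iff]; constructor <;> intro hh <;> simp_all)
  linarith [h, hA, hB, e1, e2, e3, e4, e5]
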